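/- Let (G,P) be a quasi-lattice ordered group and let V : P → B(H) be a semigroup homomorphism into isometries satisfying Nica covariance: V_s V_s* V_t V_t* = V_{s∨t} V_{s∨t}* when s ∨ t < ∞, and V_s V_s* V_t V_t* = 0 when s and t have no common upper bound. Then for r, s, t, u ∈ P with s ∨ t < ∞, one has V_r V_s* V_t V_u* = V_{r s⁻¹(s∨t)} V_{u t⁻¹(s∨t)}*, and V_r V_s* V_t V_u* = 0 when s ∨ t = ∞. -/
import Mathlib
set_option maxHeartbeats 1000000


/-- `s ≤ t` in the left-invariant order determined by `P`. -/
def qle {G : Type*} [Group G] (P : Submonoid G) (s t : G) : Prop := s⁻¹ * t ∈ P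

/-- `m` is the least upper bound in `P` of `s` and `t`. -/
def IsLubIn {G : Type*} [Group G] (P : Submonoid G) (s t m : G) : Prop :=
  m ∈ P ∧ qle P s m ∧ qle P t m ∧ ∀ v ∈ P, qle P s v → qle P t v → qle P m v

open ContinuousLinearMap in
/-- For a Nica-covariant isometric representation `V` of a quasi-lattice ordered group
`(G,P)`: if `s ∨ t = m < ∞` then
`V r V s* V t V u* = V (r s⁻¹ (s ∨ t)) (V (u t⁻¹ (s ∨ t)))*`, and if `s ∨ t = ∞`
then `V r V s* V t V u* = 0`. -/
theorem stmt10 {G H : Type*} [Group G]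
    [NormedAddCommGroup H] [InnerProductSpace ℂ H] [CompleteSpace H]
    (P : Submonoid G)
    (hP : ∀ g : G, g ∈ P → g⁻¹ ∈ P → g = 1)
    (V : G → (H →L[ℂ] H))
    (hone : V 1 = 1)
    (hhom : ∀ s ∈ P, ∀ t ∈ P, V (s * t) = (V s).comp (V t))
    (hisom : ∀ s ∈ P, (adjoint (V s)).comp (V s) = 1)
    (hnica : ∀ s ∈ P, ∀ t ∈ P,
      (∀ m : G, IsLubIn P s t m →
        ((V s).comp (adjoint (V s))).comp ((V t).comp (adjoint (V t)))
          = (V m).comp (adjoint (V m))) ∧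
      ((¬ ∃ u ∈ P, qle P s u ∧ qle P t u) →
        ((V s).comp (adjoint (V s))).comp ((V t).comp (adjoint (V t))) = 0))
    (r s t u : G) (hr : r ∈ P) (hs : s ∈ P) (ht : t ∈ P) (hu : u ∈ P) :
    (∀ m : G, IsLubIn P s t m →
      ((V r).comp (adjoint (V s))).comp ((V t).comp (adjoint (V u)))
        = (V (r * (s⁻¹ * m))).comp (adjoint (V (u * (t⁻¹ * m))))) ∧
    ((¬ ∃ m ∈ P, qle P s m ∧ qle P t m) →
      ((V r).comp (adjoint (V s))).comp ((V t).comp (adjoint (V u))) = 0) := by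
  -- isometry relations in `*` form
  have hisom' : ∀ p ∈ P, adjoint (V p) * V p = 1 := by
    intro p hp; rw [mul_def]; exact hisom p hp
  -- a useful rearrangement valid in any ring
  have rearr : adjoint (V s) * V t
      = adjoint (V s) * (V s * adjoint (V s) * (V t * adjoint (V t))) * V t := by
    have : adjoint (V s) * (V s * adjoint (V s) * (V t * adjoint (V t))) * V t
        = (adjoint (V s) * V s) * (adjoint (V s) * V t) * (adjoint (V t) * V t) := by
      noncomm_ring
    rw [this, hisom' s hs, hisom' t ht, one_mul, mul_one]
  constructor
  · intro m hm
    obtain ⟨hmP, hsm, htm, hub⟩ := hm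
    have hms : s * (s⁻¹ * m) = m := by group
    have hmt : t * (t⁻¹ * m) = m := by group
    have hVms : V m = V s * V (s⁻¹ * m) := by
      rw [mul_def, ← hhom s hs _ hsm, hms]
    have hVmt : V m = V t * V (t⁻¹ * m) := by
      rw [mul_def, ← hhom t ht _ htm, hmt]
    have hnic : V s * adjoint (V s) * (V t * adjoint (V t))
        = V m * adjoint (V m) := by
      simpa only [← mul_def] using (hnica s hs t ht).1 m ⟨hmP, hsm, htm, hub⟩
    have e2 : adjoint (V s) * V m = V (s⁻¹ * m) := by
      rw [hVms, ← mul_assoc, hisom' s hs, one_mul]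
    have e3 : adjoint (V m) * V t = adjoint (V (t⁻¹ * m)) := by
      have : adjoint (V m) = adjoint (V (t⁻¹ * m)) * adjoint (V t) := by
        rw [hVmt, mul_def, adjoint_comp, mul_def]
      rw [this, mul_assoc, hisom' t ht, mul_one]
    have key : adjoint (V s) * V t = V (s⁻¹ * m) * adjoint (V (t⁻¹ * m)) := by
      calc adjoint (V s) * V t
          = adjoint (V s) * (V s * adjoint (V s) * (V t * adjoint (V t))) * V t := rearr
        _ = adjoint (V s) * V m * (adjoint (V m) * V t) := by
            rw [hnic]; noncomm_ring
        _ = V (s⁻¹ * m) * adjoint (V (t⁻¹ * m)) := by rw [e2, e3]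
    have hrx : V (r * (s⁻¹ * m)) = V r * V (s⁻¹ * m) := by
      rw [mul_def, ← hhom r hr _ hsm]
    have huy : adjoint (V (u * (t⁻¹ * m)))
        = adjoint (V (t⁻¹ * m)) * adjoint (V u) := by
      rw [hhom u hu _ htm, adjoint_comp, mul_def]
    simp only [← mul_def]
    rw [hrx, huy]
    calc V r * adjoint (V s) * (V t * adjoint (V u))
        = V r * (adjoint (V s) * V t) * adjoint (V u) := by noncomm_ring
      _ = V r * (V (s⁻¹ * m) * adjoint (V (t⁻¹ * m))) * adjoint (V u) := by rw [key]
      _ = V r * V (s⁻¹ * m) * (adjoint (V (t⁻¹ * m)) * adjoint (V u)) := by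
          noncomm_ring
  · intro hno
    have hnic0 : V s * adjoint (V s) * (V t * adjoint (V t)) = 0 := by
      simpa only [← mul_def] using (hnica s hs t ht).2 hno
    have key0 : adjoint (V s) * V t = 0 := by
      rw [rearr, hnic0, mul_zero, zero_mul]
    simp only [← mul_def]
    calc V r * adjoint (V s) * (V t * adjoint (V u))
        = V r * (adjoint (V s) * V t) * adjoint (V u) := by noncomm_ring
      _ = 0 := by rw [key0, mul_zero, zero_mul]
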